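/- arXiv:math/0106008 — 3 statements merged into one kernel-verified Lean document; each statement's English description precedes it below -/
import Mathlib

section
/- Let n ≥ 0 be an integer, 1 < p < ∞, and ε > 0. The integral operator G on L^p((0,∞), t^{(n+1)p/2 - 1} dt) with kernel k(t,s) = t^{-(n+1)/2-ε} s^{-(n+1)/2+ε} for s ≤ t and k(t,s) = 0 for s > t (acting by (Gu)(t) = ∫₀^∞ k(t,s) u(s) s^n ds) is bounded with operator norm at most 1/ε. -/
/-!
With `f s = u s * s ^ ((n - 1) / 2 + ε)` one has `(Gu)(t) = t ^ (-(n + 1) / 2 - ε) * ∫₀ᵗ f`, and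
the estimate becomes Hardy's inequality
`∫₀^∞ (∫₀ᵗ f) ^ p t ^ (-ε p - 1) dt ≤ ε ^ (-p) ∫₀^∞ f ^ p t ^ ((1 - ε) p - 1) dt`.
Hölder's inequality on `(0, t]` against the weight `s ^ ((ε - 1) / q)` gives
`(∫₀ᵗ f) ^ p ≤ (t ^ ε / ε) ^ (p - 1) ∫₀ᵗ f ^ p s ^ ((1 - ε) (p - 1))`; after exchanging the order of
integration, `∫ₛ^∞ t ^ (-ε - 1) dt = s ^ (-ε) / ε` supplies the missing power of `s` and of `1 / ε`.
-/

open MeasureTheory Set ENNReal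

lemma ofReal_rpow_mul_ofReal_rpow {s : ℝ} (hs : 0 < s) (a b : ℝ) :
    ENNReal.ofReal (s ^ a) * ENNReal.ofReal (s ^ b) = ENNReal.ofReal (s ^ (a + b)) := by
  rw [← ENNReal.ofReal_mul (Real.rpow_nonneg hs.le a), Real.rpow_add hs]

lemma ofReal_rpow_rpow {s : ℝ} (hs : 0 < s) (a p : ℝ) :
    ENNReal.ofReal (s ^ a) ^ p = ENNReal.ofReal (s ^ (a * p)) := by
  rw [ENNReal.ofReal_rpow_of_pos (Real.rpow_pos_of_pos hs a), ← Real.rpow_mul hs.le]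

lemma lintegral_Ioc_rpow {t r : ℝ} (ht : 0 ≤ t) (hr : -1 < r) :
    ∫⁻ s in Ioc 0 t, ENNReal.ofReal (s ^ r) = ENNReal.ofReal (t ^ (r + 1) / (r + 1)) := by
  have hint : IntegrableOn (fun s : ℝ => s ^ r) (Ioc 0 t) :=
    (intervalIntegrable_iff_integrableOn_Ioc_of_le ht).mp
      (intervalIntegral.intervalIntegrable_rpow' hr)
  rw [← ofReal_integral_eq_lintegral_ofReal hint
    ((ae_restrict_mem measurableSet_Ioc).mono fun s hs => Real.rpow_nonneg hs.1.le r),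
    ← intervalIntegral.integral_of_le ht, integral_rpow (Or.inl hr),
    Real.zero_rpow (by linarith), sub_zero]

lemma lintegral_Ioi_rpow {s r : ℝ} (hs : 0 < s) (hr : r < -1) :
    ∫⁻ t in Ioi s, ENNReal.ofReal (t ^ r) = ENNReal.ofReal (-s ^ (r + 1) / (r + 1)) := by
  rw [← ofReal_integral_eq_lintegral_ofReal (integrableOn_Ioi_rpow_of_lt hr hs)
    ((ae_restrict_mem measurableSet_Ioi).mono fun t ht => Real.rpow_nonneg (hs.trans ht).le r),
    integral_Ioi_rpow_of_lt hr hs]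

lemma lintegral_mul_rpow_le {α : Type*} [MeasurableSpace α] (μ : Measure α) {p q : ℝ}
    (hpq : p.HolderConjugate q) {f g : α → ℝ≥0∞} (hf : AEMeasurable f μ)
    (hg : AEMeasurable g μ) :
    (∫⁻ a, f a * g a ∂μ) ^ p ≤ (∫⁻ a, f a ^ p ∂μ) * (∫⁻ a, g a ^ q ∂μ) ^ (p - 1) :=
  calc (∫⁻ a, f a * g a ∂μ) ^ p
      ≤ ((∫⁻ a, f a ^ p ∂μ) ^ (1 / p) * (∫⁻ a, g a ^ q ∂μ) ^ (1 / q)) ^ p :=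
        ENNReal.rpow_le_rpow (ENNReal.lintegral_mul_le_Lp_mul_Lq μ hpq hf hg) hpq.nonneg
    _ = (∫⁻ a, f a ^ p ∂μ) * (∫⁻ a, g a ^ q ∂μ) ^ (p - 1) := by
        rw [ENNReal.mul_rpow_of_nonneg _ _ hpq.nonneg, ← ENNReal.rpow_mul, ← ENNReal.rpow_mul,
          one_div_mul_cancel hpq.ne_zero, ENNReal.rpow_one, one_div_mul_eq_div,
          hpq.div_conj_eq_sub_one]

lemma lintegral_Ioi_lintegral_Ioc_swap {a : ℝ} {F : ℝ → ℝ → ℝ≥0∞}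
    (hF : Measurable (Function.uncurry F)) :
    ∫⁻ t in Ioi a, ∫⁻ s in Ioc a t, F t s = ∫⁻ s in Ioi a, ∫⁻ t in Ioi s, F t s := by
  set G := {q : ℝ × ℝ | q.2 ≤ q.1}.indicator (Function.uncurry F)
  have hG : Measurable G := hF.indicator (measurableSet_le measurable_snd measurable_fst)
  have hG_left (t s : ℝ) : G (t, s) = (Iic t).indicator (F t) s := by simp [G, indicator]
  have hG_right (t s : ℝ) : G (t, s) = (Ici s).indicator (fun t => F t s) t := by
    simp [G, indicator]
  calc ∫⁻ t in Ioi a, ∫⁻ s in Ioc a t, F t s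
      = ∫⁻ t in Ioi a, ∫⁻ s in Ioi a, G (t, s) := by
        refine setLIntegral_congr_fun measurableSet_Ioi fun t _ => ?_
        rw [lintegral_congr (hG_left t), lintegral_indicator measurableSet_Iic,
          Measure.restrict_restrict measurableSet_Iic, Iic_inter_Ioi]
    _ = ∫⁻ s in Ioi a, ∫⁻ t in Ioi a, G (t, s) :=
        lintegral_lintegral_swap (f := fun t s => G (t, s)) hG.aemeasurable
    _ = ∫⁻ s in Ioi a, ∫⁻ t in Ioi s, F t s := by
        refine setLIntegral_congr_fun measurableSet_Ioi fun s hs => ?_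
        rw [lintegral_congr (hG_right · s), lintegral_indicator measurableSet_Ici,
          Measure.restrict_restrict measurableSet_Ici,
          inter_eq_left.mpr (Ici_subset_Ioi.mpr hs), Measure.restrict_congr_set Ioi_ae_eq_Ici]

lemma lintegral_Ioc_rpow_le {p ε t : ℝ} (hp : 1 < p) (hε : 0 < ε) (ht : 0 < t)
    {f : ℝ → ℝ≥0∞} (hf : Measurable f) :
    (∫⁻ s in Ioc 0 t, f s) ^ p ≤
      (∫⁻ s in Ioc 0 t, f s ^ p * ENNReal.ofReal (s ^ ((1 - ε) * (p - 1)))) *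
        ENNReal.ofReal ((t ^ ε / ε) ^ (p - 1)) := by
  have hq := Real.HolderConjugate.conjExponent hp
  set q := p.conjExponent
  set d := (ε - 1) / q
  have hsplit : ∀ s ∈ Ioc (0 : ℝ) t,
      f s = f s * ENNReal.ofReal (s ^ (-d)) * ENNReal.ofReal (s ^ d) := fun s hs => by
    rw [mul_assoc, ofReal_rpow_mul_ofReal_rpow hs.1, neg_add_cancel, Real.rpow_zero,
      ENNReal.ofReal_one, mul_one]
  have hfirst : ∀ s ∈ Ioc (0 : ℝ) t, (f s * ENNReal.ofReal (s ^ (-d))) ^ p =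
      f s ^ p * ENNReal.ofReal (s ^ ((1 - ε) * (p - 1))) := fun s hs => by
    rw [ENNReal.mul_rpow_of_nonneg _ _ hq.nonneg, ofReal_rpow_rpow hs.1, ← hq.div_conj_eq_sub_one]
    congr 3
    ring
  have hsecond : ∫⁻ s in Ioc 0 t, ENNReal.ofReal (s ^ d) ^ q = ENNReal.ofReal (t ^ ε / ε) := by
    rw [setLIntegral_congr_fun measurableSet_Ioc fun s hs => ofReal_rpow_rpow hs.1 d q,
      div_mul_cancel₀ _ hq.symm.ne_zero, lintegral_Ioc_rpow ht.le (by linarith), sub_add_cancel]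
  calc (∫⁻ s in Ioc 0 t, f s) ^ p
      = (∫⁻ s in Ioc 0 t, f s * ENNReal.ofReal (s ^ (-d)) * ENNReal.ofReal (s ^ d)) ^ p := by
        rw [setLIntegral_congr_fun measurableSet_Ioc hsplit]
    _ ≤ (∫⁻ s in Ioc 0 t, (f s * ENNReal.ofReal (s ^ (-d))) ^ p) *
          (∫⁻ s in Ioc 0 t, ENNReal.ofReal (s ^ d) ^ q) ^ (p - 1) :=
        lintegral_mul_rpow_le _ hq (by fun_prop) (by fun_prop)
    _ = _ := by
        rw [setLIntegral_congr_fun measurableSet_Ioc hfirst, hsecond,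
          ENNReal.ofReal_rpow_of_nonneg (by positivity) (by linarith)]

theorem hardy_inequality {p ε : ℝ} (hp : 1 < p) (hε : 0 < ε) {f : ℝ → ℝ≥0∞}
    (hf : Measurable f) :
    ∫⁻ t in Ioi 0, (∫⁻ s in Ioc 0 t, f s) ^ p * ENNReal.ofReal (t ^ (-ε * p - 1)) ≤
      ENNReal.ofReal (ε ^ (-p)) *
        ∫⁻ t in Ioi 0, f t ^ p * ENNReal.ofReal (t ^ ((1 - ε) * p - 1)) := by
  set w := (1 - ε) * (p - 1)
  set F : ℝ → ℝ → ℝ≥0∞ := fun t s =>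
    f s ^ p * ENNReal.ofReal (s ^ w) * ENNReal.ofReal (t ^ (-ε - 1))
  have hF : Measurable (Function.uncurry F) := by fun_prop
  have hpointwise : ∀ t ∈ Ioi (0 : ℝ),
      (∫⁻ s in Ioc 0 t, f s) ^ p * ENNReal.ofReal (t ^ (-ε * p - 1)) ≤
        ENNReal.ofReal (ε ^ (1 - p)) * ∫⁻ s in Ioc 0 t, F t s := fun t (ht : 0 < t) => by
    have hweight : (t ^ ε / ε) ^ (p - 1) * t ^ (-ε * p - 1) = ε ^ (1 - p) * t ^ (-ε - 1) := by
      rw [Real.div_rpow (by positivity) hε.le, ← Real.rpow_mul ht.le, div_mul_eq_mul_div,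
        ← Real.rpow_add ht, show (1 : ℝ) - p = -(p - 1) by ring, Real.rpow_neg hε.le]
      ring_nf
    calc (∫⁻ s in Ioc 0 t, f s) ^ p * ENNReal.ofReal (t ^ (-ε * p - 1))
        ≤ (∫⁻ s in Ioc 0 t, f s ^ p * ENNReal.ofReal (s ^ w)) *
            ENNReal.ofReal ((t ^ ε / ε) ^ (p - 1)) * ENNReal.ofReal (t ^ (-ε * p - 1)) := by
          gcongr
          exact lintegral_Ioc_rpow_le hp hε ht hf
      _ = ENNReal.ofReal (ε ^ (1 - p)) * ∫⁻ s in Ioc 0 t, F t s := by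
          rw [lintegral_mul_const' _ _ ENNReal.ofReal_ne_top, mul_assoc,
            ← ENNReal.ofReal_mul (by positivity), hweight,
            ENNReal.ofReal_mul (by positivity)]
          ring
  have hinner : ∀ s ∈ Ioi (0 : ℝ), ∫⁻ t in Ioi s, F t s =
      ENNReal.ofReal ε⁻¹ * (f s ^ p * ENNReal.ofReal (s ^ ((1 - ε) * p - 1))) :=
    fun s (hs : 0 < s) => by
      rw [lintegral_const_mul _ (by fun_prop), lintegral_Ioi_rpow hs (by linarith),
        show -ε - 1 + 1 = -ε by ring, neg_div_neg_eq, div_eq_mul_inv,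
        ENNReal.ofReal_mul (by positivity), ← mul_assoc, mul_assoc (f s ^ p),
        ofReal_rpow_mul_ofReal_rpow hs, show w + -ε = (1 - ε) * p - 1 by ring]
      ring
  calc ∫⁻ t in Ioi 0, (∫⁻ s in Ioc 0 t, f s) ^ p * ENNReal.ofReal (t ^ (-ε * p - 1))
      ≤ ∫⁻ t in Ioi 0, ENNReal.ofReal (ε ^ (1 - p)) * ∫⁻ s in Ioc 0 t, F t s :=
        setLIntegral_mono' measurableSet_Ioi hpointwise
    _ = ENNReal.ofReal (ε ^ (1 - p)) * ∫⁻ s in Ioi 0, ∫⁻ t in Ioi s, F t s := by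
        rw [lintegral_const_mul' _ _ ENNReal.ofReal_ne_top, lintegral_Ioi_lintegral_Ioc_swap hF]
    _ = ENNReal.ofReal (ε ^ (-p)) *
          ∫⁻ t in Ioi 0, f t ^ p * ENNReal.ofReal (t ^ ((1 - ε) * p - 1)) := by
        rw [setLIntegral_congr_fun measurableSet_Ioi hinner,
          lintegral_const_mul' _ _ ENNReal.ofReal_ne_top, ← mul_assoc,
          ← ENNReal.ofReal_mul (by positivity), ← Real.rpow_neg_one,
          ← Real.rpow_add hε, sub_add_eq_add_sub, add_neg_cancel, zero_sub]

/-- The integral operator on `L^p((0,∞), t^{(n+1)p/2-1} dt)` with kernel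
`k(t,s) = t^{-(n+1)/2-ε} s^{-(n+1)/2+ε}` for `s ≤ t` (and `0` for `s > t`), acting by
`(Gu)(t) = ∫₀^∞ k(t,s) u(s) s^n ds`, is bounded with operator norm at most `1/ε`. -/
theorem kernel_case_one_bounded (n : ℕ) (p ε : ℝ) (hp : 1 < p)
    (hε : 0 < ε) (u : ℝ → ℝ≥0∞) (hu : Measurable u) :
    ∫⁻ t in Ioi (0:ℝ),
        (∫⁻ s in Ioc (0:ℝ) t,
            ENNReal.ofReal (t ^ (-((n:ℝ)+1)/2 - ε) * s ^ (-((n:ℝ)+1)/2 + ε)) * u s *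
              ENNReal.ofReal (s ^ (n:ℝ))) ^ p *
          ENNReal.ofReal (t ^ (((n:ℝ)+1)*p/2 - 1)) ≤
      ENNReal.ofReal ((1/ε) ^ p) *
        ∫⁻ t in Ioi (0:ℝ), (u t) ^ p * ENNReal.ofReal (t ^ (((n:ℝ)+1)*p/2 - 1)) := by
  set D := ((n:ℝ) + 1) * p / 2 - 1
  set c := (n - 1) / 2 + ε
  set f : ℝ → ℝ≥0∞ := fun s => u s * ENNReal.ofReal (s ^ c)
  have hkernel : ∀ t ∈ Ioi (0 : ℝ),
      (∫⁻ s in Ioc 0 t, ENNReal.ofReal (t ^ (-((n:ℝ)+1)/2 - ε) * s ^ (-((n:ℝ)+1)/2 + ε)) *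
          u s * ENNReal.ofReal (s ^ (n:ℝ))) ^ p * ENNReal.ofReal (t ^ D) =
        (∫⁻ s in Ioc 0 t, f s) ^ p * ENNReal.ofReal (t ^ (-ε * p - 1)) := fun t (ht : 0 < t) => by
    have hfactor : ∀ s ∈ Ioc (0 : ℝ) t,
        ENNReal.ofReal (t ^ (-((n:ℝ)+1)/2 - ε) * s ^ (-((n:ℝ)+1)/2 + ε)) * u s *
          ENNReal.ofReal (s ^ (n:ℝ)) = ENNReal.ofReal (t ^ (-((n:ℝ)+1)/2 - ε)) * f s :=
      fun s hs => by
        rw [ENNReal.ofReal_mul (by positivity), mul_assoc, mul_assoc, mul_left_comm _ (u s),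
          ofReal_rpow_mul_ofReal_rpow hs.1, show -((n:ℝ)+1)/2 + ε + n = c by ring]
    rw [setLIntegral_congr_fun measurableSet_Ioc hfactor,
      lintegral_const_mul' _ _ ENNReal.ofReal_ne_top, ENNReal.mul_rpow_of_nonneg _ _ (by linarith),
      ofReal_rpow_rpow ht, mul_right_comm, ofReal_rpow_mul_ofReal_rpow ht, mul_comm,
      show (-((n:ℝ)+1)/2 - ε) * p + D = -ε * p - 1 by ring]
  have hweight : ∀ t ∈ Ioi (0 : ℝ),
      f t ^ p * ENNReal.ofReal (t ^ ((1 - ε) * p - 1)) = u t ^ p * ENNReal.ofReal (t ^ D) :=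
    fun t (ht : 0 < t) => by
      rw [ENNReal.mul_rpow_of_nonneg _ _ (by linarith), ofReal_rpow_rpow ht, mul_assoc,
        ofReal_rpow_mul_ofReal_rpow ht, show c * p + ((1 - ε) * p - 1) = D by ring]
  calc _ = ∫⁻ t in Ioi 0, (∫⁻ s in Ioc 0 t, f s) ^ p * ENNReal.ofReal (t ^ (-ε * p - 1)) :=
        setLIntegral_congr_fun measurableSet_Ioi hkernel
    _ ≤ ENNReal.ofReal (ε ^ (-p)) *
          ∫⁻ t in Ioi 0, f t ^ p * ENNReal.ofReal (t ^ ((1 - ε) * p - 1)) :=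
        hardy_inequality hp hε (by fun_prop)
    _ = _ := by
        rw [setLIntegral_congr_fun measurableSet_Ioi hweight, one_div, Real.inv_rpow hε.le,
          Real.rpow_neg hε.le]
end

section
/- Under the same hypotheses (A1), (A2) on a closed densely defined operator A on a Banach space F, the map z ↦ A^z from the open left half-plane ℍ = {Re z < 0} to the bounded operators on F is holomorphic. -/
/-!
For `λ` on the contour, `z ↦ λ ^ z` is entire and `‖λ ^ z‖ ≤ |λ| ^ Re z · e ^ (π |Im z|)`.
The resolvent identity makes `λ ↦ (λ - A)⁻¹` continuous on `Λ \ {0}`, so together with (A2)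
it gives `|λ| ‖(λ - A)⁻¹‖ ≤ K` along the whole contour. Since `|λ|` grows linearly in the
contour parameter `u`, on a small disc around a point of `{Re z < 0}` the integrand is
`O((1 + |u|) ^ (-1 - a))` for some `a > 0`, uniformly in `z`. By Cauchy's estimate the same
holds for its `z`-derivative, and the integral can be differentiated under the integral sign.
-/

open MeasureTheory Complex

/-- The keyhole region `Λ(δ,θ) = {λ : |λ| ≤ δ or |arg λ| ≥ θ}`. -/
def keyhole (δ θ : ℝ) : Set ℂ := {l : ℂ | ‖l‖ ≤ δ ∨ θ ≤ |Complex.arg l|}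

/-- The (positively oriented, with `Λ` to the left) parametrized boundary `𝒞` of the
keyhole `Λ(δ,θ)`: the incoming ray `{r e^{iθ} : r ≥ δ}`, the arc `{δ e^{-iu} : |u| ≤ θ}`
and the outgoing ray `{r e^{-iθ} : r ≥ δ}`. -/
noncomputable def keyholeContour (δ θ : ℝ) : ℝ → ℂ := fun u =>
  if u ≤ -θ then ((δ - (u + θ) : ℝ) : ℂ) * Complex.exp (θ * Complex.I)
  else if u ≤ θ then ((δ : ℝ) : ℂ) * Complex.exp (-(u : ℂ) * Complex.I)
  else ((δ + (u - θ) : ℝ) : ℂ) * Complex.exp (-(θ : ℂ) * Complex.I)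

variable {F : Type*} [NormedAddCommGroup F] [NormedSpace ℂ F] [CompleteSpace F]

/-- The Dunford integral `A^z = (1/2πi) ∫_𝒞 λ^z (λ-A)^{-1} dλ`, where `R λ = (λ-A)^{-1}`
and `λ^z` is the principal branch power. -/
noncomputable def cpowA (δ θ : ℝ) (R : ℂ → F →L[ℂ] F) (z : ℂ) : F →L[ℂ] F :=
  (2 * (Real.pi : ℂ) * Complex.I)⁻¹ •
    ∫ u : ℝ, ((keyholeContour δ θ u) ^ z * deriv (keyholeContour δ θ) u) •
      R (keyholeContour δ θ u)

open Filter Topology Metric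

theorem norm_cpow_le_rpow_mul_exp (z w : ℂ) :
    ‖z ^ w‖ ≤ ‖z‖ ^ w.re * Real.exp (Real.pi * |w.im|) := by
  refine (norm_cpow_le z w).trans ?_
  rw [div_eq_mul_inv, ← Real.exp_neg]
  gcongr
  calc -(arg z * w.im) ≤ |arg z| * |w.im| := by rw [← abs_mul]; exact neg_le_abs _
    _ ≤ Real.pi * |w.im| := by gcongr; exact abs_arg_le_pi z

theorem Real.rpow_le_rpow_mul_rpow_of_mul_le {c s r x a b : ℝ} (hc : 0 < c) (hc1 : c ≤ 1)
    (hs : 1 ≤ s) (hr : c * s ≤ r) (hax : a ≤ x) (hxb : x ≤ b) (hb : b ≤ 0) :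
    r ^ x ≤ c ^ a * s ^ b := calc
  r ^ x ≤ (c * s) ^ x := Real.rpow_le_rpow_of_nonpos (by positivity) hr (hxb.trans hb)
  _ = c ^ x * s ^ x := Real.mul_rpow hc.le (by positivity)
  _ ≤ c ^ a * s ^ b := mul_le_mul (Real.rpow_le_rpow_of_exponent_ge hc hc1 hax)
    (Real.rpow_le_rpow_of_exponent_le hs hxb) (by positivity) (by positivity)

section ParametricIntegral

variable {α E : Type*} [MeasurableSpace α] {μ : Measure α}
  [NormedAddCommGroup E] [NormedSpace ℂ E]

theorem differentiableOn_integral_of_locally_dominated {U : Set ℂ} (hU : IsOpen U)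
    {F F' : ℂ → α → E}
    (hF_meas : ∀ z ∈ U, AEStronglyMeasurable (F z) μ)
    (hF'_meas : ∀ z ∈ U, AEStronglyMeasurable (F' z) μ)
    (hF' : ∀ᵐ u ∂μ, ∀ z ∈ U, HasDerivAt (F · u) (F' z u) z)
    (h_bound : ∀ z ∈ U, ∃ ε > 0, ∃ g : α → ℝ, Integrable g μ ∧
      ∀ᵐ u ∂μ, ∀ w ∈ closedBall z ε, ‖F w u‖ ≤ g u) :
    DifferentiableOn ℂ (fun z => ∫ u, F z u ∂μ) U := by
  intro z hz
  obtain ⟨ε, hε, g, hg, hFg⟩ := h_bound z hz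
  obtain ⟨r, hr, hrU⟩ := nhds_basis_closedBall.mem_iff.1 (hU.mem_nhds hz)
  set ρ := min ε r / 2 with hρ_def
  have hρ : 0 < ρ := by positivity
  have hsub : ∀ w ∈ ball z ρ, closedBall w ρ ⊆ closedBall z ε ∩ U := by
    intro w hw v hv
    have hvz : dist v z ≤ min ε r := by
      linarith [dist_triangle v w z, mem_closedBall.1 hv, (mem_ball.1 hw).le, hρ_def]
    exact ⟨hvz.trans (min_le_left _ _), hrU (hvz.trans (min_le_right _ _))⟩
  -- Cauchy's estimate turns the bound on `F` into a bound on its derivative.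
  have hF'g : ∀ᵐ u ∂μ, ∀ w ∈ ball z ρ, ‖F' w u‖ ≤ g u / ρ := by
    filter_upwards [hF', hFg] with u hderiv hbound w hw
    have hdiff : DifferentiableOn ℂ (F · u) U := fun v hv =>
      (hderiv v hv).differentiableAt.differentiableWithinAt
    rw [← (hderiv w (hsub w hw (mem_closedBall_self hρ.le)).2).deriv]
    exact norm_deriv_le_of_forall_mem_sphere_norm_le hρ
      (hdiff.diffContOnCl_ball fun v hv => (hsub w hw hv).2)
      fun v hv => hbound v (hsub w hw (sphere_subset_closedBall hv)).1
  have hint : Integrable (F z) μ :=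
    hg.mono' (hF_meas z hz) (hFg.mono fun u hu => hu z (mem_closedBall_self hε.le))
  refine (hasDerivAt_integral_of_dominated_loc_of_deriv_le (ball_mem_nhds z hρ)
    (eventually_of_mem (hU.mem_nhds hz) hF_meas) hint (hF'_meas z hz) hF'g
    (hg.div_const ρ) ?_).2.differentiableAt.differentiableWithinAt
  filter_upwards [hF'] with u hu w hw
  exact hu w (hsub w hw (mem_closedBall_self hρ.le)).2

theorem differentiableOn_integral_cpow_smul {f : ℝ → ℂ} {H : ℝ → E} {c K : ℝ}
    (hf : Measurable f) (hH : AEStronglyMeasurable H) (hc : 0 < c)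
    (hfc : ∀ u, c * (1 + |u|) ≤ ‖f u‖) (hHK : ∀ᵐ u, ‖f u‖ * ‖H u‖ ≤ K) :
    DifferentiableOn ℂ (fun z : ℂ => ∫ u, f u ^ z • H u) {z | z.re < 0} := by
  wlog hc1 : c ≤ 1 generalizing c
  · exact this (lt_min hc one_pos) (fun u => (mul_le_mul_of_nonneg_right (min_le_left c 1)
      (by positivity)).trans (hfc u)) (min_le_right c 1)
  have hf0 : ∀ u, f u ≠ 0 := fun u =>
    norm_pos_iff.1 ((by positivity : 0 < c * (1 + |u|)).trans_le (hfc u))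
  refine differentiableOn_integral_of_locally_dominated (isOpen_lt continuous_re continuous_const)
    (F' := fun z u => (f u ^ z * log (f u)) • H u)
    (fun z _ => (hf.pow_const z).aestronglyMeasurable.smul hH)
    (fun z _ => ((hf.pow_const z).mul (measurable_log.comp hf)).aestronglyMeasurable.smul hH)
    (Eventually.of_forall fun u z _ =>
      ((hasStrictDerivAt_const_cpow (Or.inl (hf0 u))).hasDerivAt.smul_const (H u)))
    fun (z : ℂ) (hz : z.re < 0) => ?_
  set ε := -z.re / 2 with hε_def
  have hε : 0 < ε := by linarith
  refine ⟨ε, hε, fun u => Real.exp (Real.pi * (|z.im| + ε)) *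
    (c ^ (-3 * ε - 1) * (1 + |u|) ^ (-(1 + ε))) * K, ?_, ?_⟩
  · have := integrable_one_add_norm (E := ℝ) (μ := volume) (r := 1 + ε) (by simpa using hε)
    simp only [Real.norm_eq_abs] at this
    exact ((this.const_mul _).const_mul _).mul_const K
  filter_upwards [hHK] with u hu w hw
  have hw' : ‖w - z‖ ≤ ε := by rwa [mem_closedBall, dist_eq] at hw
  have hre := (abs_re_le_norm (w - z)).trans hw'
  have him := (abs_im_le_norm (w - z)).trans hw'
  rw [sub_re, abs_le] at hre
  rw [sub_im] at him
  have hpos : 0 < ‖f u‖ := norm_pos_iff.2 (hf0 u)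
  calc ‖f u ^ w • H u‖ ≤ ‖f u ^ w‖ * ‖H u‖ := norm_smul_le _ _
    _ ≤ ‖f u‖ ^ w.re * Real.exp (Real.pi * |w.im|) * ‖H u‖ := by
      gcongr; exact norm_cpow_le_rpow_mul_exp _ _
    _ = Real.exp (Real.pi * |w.im|) * ‖f u‖ ^ (w.re - 1) * (‖f u‖ * ‖H u‖) := by
      rw [Real.rpow_sub_one hpos.ne']; field_simp
    _ ≤ _ := by
      gcongr
      · nlinarith [abs_sub_abs_le_abs_sub w.im z.im, Real.pi_pos]
      · exact Real.rpow_le_rpow_mul_rpow_of_mul_le hc hc1 (by simp) (hfc u) (by linarith)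
          (by linarith) (by linarith)

end ParametricIntegral

/-- `r = (lam - A)⁻¹`, as a two-sided inverse of `lam - A : D → F`. -/
def IsResolventAt {F : Type*} [NormedAddCommGroup F] [NormedSpace ℂ F] {D : Submodule ℂ F}
    (A : D →ₗ[ℂ] F) (r : F →L[ℂ] F) (lam : ℂ) : Prop :=
  (∀ f : F, r f ∈ D) ∧ (∀ (f : F) (h : r f ∈ D), A ⟨r f, h⟩ = lam • r f - f) ∧
    (∀ d : D, r (lam • (d : F) - A d) = (d : F))

theorem IsResolventAt.sub_eq {F : Type*} [NormedAddCommGroup F] [NormedSpace ℂ F]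
    {D : Submodule ℂ F} {A : D →ₗ[ℂ] F} {r s : F →L[ℂ] F} {l m : ℂ}
    (hr : IsResolventAt A r l) (hs : IsResolventAt A s m) : r - s = (m - l) • (r * s) := by
  ext f
  obtain ⟨hsD, hsA, -⟩ := hs
  have key : r (l • s f - (m • s f - f)) = s f := hsA f (hsD f) ▸ hr.2.2 ⟨s f, hsD f⟩
  have : l • s f - (m • s f - f) = (l - m) • s f + f := by rw [sub_smul]; abel
  rw [this, map_add, map_smul] at key
  change r f - s f = (m - l) • r (s f)
  calc r f - s f = r f - ((l - m) • r (s f) + r f) := by rw [key]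
    _ = (m - l) • r (s f) := by rw [← neg_sub l m, neg_smul]; abel

theorem continuousOn_of_resolvent_identity {𝕜 𝒜 : Type*} [NormedField 𝕜] [NormedRing 𝒜]
    [NormedAlgebra 𝕜 𝒜] {R : 𝕜 → 𝒜} {K : Set 𝕜}
    (hR : ∀ l ∈ K, ∀ m ∈ K, R l - R m = (m - l) • (R l * R m)) : ContinuousOn R K := by
  intro m hm
  set c := ‖R m‖
  have hlip : ∀ l ∈ K, ‖l - m‖ * c ≤ 1 / 2 → ‖R l - R m‖ ≤ 2 * c ^ 2 * ‖l - m‖ := by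
    intro l hl hlm
    have hdiff : ‖R l - R m‖ ≤ ‖l - m‖ * ‖R l‖ * c := by
      rw [hR l hl m hm, norm_smul, norm_sub_rev, mul_assoc]
      gcongr
      exact norm_mul_le _ _
    -- `‖R l‖ ≤ ‖R m‖ + ‖l - m‖ ‖R l‖ ‖R m‖ ≤ ‖R m‖ + ‖R l‖ / 2`
    have hRl : ‖R l‖ ≤ 2 * c := by
      nlinarith [norm_sub_norm_le (R l) (R m), norm_nonneg (R l), norm_nonneg (l - m)]
    calc ‖R l - R m‖ ≤ ‖l - m‖ * ‖R l‖ * c := hdiff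
      _ ≤ ‖l - m‖ * (2 * c) * c := by gcongr
      _ = 2 * c ^ 2 * ‖l - m‖ := by ring
  have hnorm : Tendsto (fun l => ‖l - m‖) (𝓝[K] m) (𝓝 0) :=
    (tendsto_norm_sub_self m).mono_left nhdsWithin_le_nhds
  have hsmall : ∀ᶠ l in 𝓝[K] m, ‖l - m‖ * c ≤ 1 / 2 := by
    simpa using (hnorm.mul_const c).eventually (ge_mem_nhds (by norm_num : (0 : ℝ) * c < 1 / 2))
  rw [ContinuousWithinAt, tendsto_iff_norm_sub_tendsto_zero]
  refine squeeze_zero' (Eventually.of_forall fun l => norm_nonneg _) ?_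
    (by simpa using hnorm.const_mul (2 * c ^ 2))
  filter_upwards [self_mem_nhdsWithin, hsmall] with l hl hlm using hlip l hl hlm

section Contour

variable {δ θ : ℝ}

theorem norm_keyholeContour (hδ : 0 ≤ δ) (hθ : 0 ≤ θ) (u : ℝ) :
    ‖keyholeContour δ θ u‖ = δ + max (|u| - θ) 0 := by
  have hexp : ∀ x : ℝ, ‖exp (-(x : ℂ) * I)‖ = 1 := fun x => by
    rw [← ofReal_neg, norm_exp_ofReal_mul_I]
  unfold keyholeContour
  split_ifs with h₁ h₂
  · rw [norm_mul, norm_exp_ofReal_mul_I, norm_real, Real.norm_eq_abs, abs_of_nonneg (by linarith),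
      abs_of_nonpos (by linarith), max_eq_left (by linarith)]
    ring
  · rw [norm_mul, hexp, norm_real, Real.norm_eq_abs, abs_of_nonneg hδ,
      max_eq_right (by linarith [abs_le.2 ⟨(not_le.1 h₁).le, h₂⟩])]
    ring
  · rw [norm_mul, hexp, norm_real, Real.norm_eq_abs, abs_of_nonneg (by linarith),
      abs_of_pos (by linarith), max_eq_left (by linarith)]
    ring

theorem keyholeContour_ne_zero (hδ : 0 < δ) (hθ : 0 ≤ θ) (u : ℝ) : keyholeContour δ θ u ≠ 0 := by
  rw [← norm_pos_iff, norm_keyholeContour hδ.le hθ]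
  positivity

theorem keyholeContour_mem_keyhole (hδ : 0 < δ) (hθ : 0 ≤ θ) (hθπ : θ < Real.pi) (u : ℝ) :
    keyholeContour δ θ u ∈ keyhole δ θ := by
  have harg : ∀ {ρ φ : ℝ}, 0 < ρ → |φ| ≤ θ → (ρ * exp (φ * I)).arg = φ := fun hρ hφ => by
    rw [exp_mul_I, arg_mul_cos_add_sin_mul_I hρ]
    constructor <;> linarith [abs_le.1 hφ]
  unfold keyholeContour keyhole
  split_ifs with h₁ h₂
  · exact Or.inr (by rw [harg (by linarith) (abs_of_nonneg hθ).le, abs_of_nonneg hθ])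
  · left
    rw [norm_mul, ← ofReal_neg, norm_exp_ofReal_mul_I, norm_real, Real.norm_eq_abs,
      abs_of_pos hδ, mul_one]
  · right
    rw [← ofReal_neg, harg (by linarith) (by rw [abs_neg, abs_of_nonneg hθ]), abs_neg]
    exact le_abs_self θ

theorem continuous_keyholeContour (hθ : 0 ≤ θ) : Continuous (keyholeContour δ θ) := by
  unfold keyholeContour
  refine Continuous.if_le (by fun_prop) (Continuous.if_le (by fun_prop) (by fun_prop)
    continuous_id continuous_const fun u hu => ?_) continuous_id continuous_const fun u hu => ?_
  · simp [hu]
  · rw [if_pos (by linarith)]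
    simp [hu]

theorem norm_deriv_keyholeContour_le (hδ : 0 ≤ δ) (hθ : 0 ≤ θ) {u : ℝ} (h₁ : u ≠ -θ) (h₂ : u ≠ θ) :
    ‖deriv (keyholeContour δ θ) u‖ ≤ max 1 δ := by
  obtain hu₁ | hu₁ := h₁.lt_or_gt
  · have heq : keyholeContour δ θ =ᶠ[𝓝 u] fun v => ((δ - (v + θ) : ℝ) : ℂ) * exp (θ * I) := by
      filter_upwards [Iio_mem_nhds hu₁] with v hv using if_pos hv.le
    have hd := (((hasDerivAt_id u).add_const θ).const_sub δ).ofReal_comp.mul_const (exp (θ * I))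
    simp only [id] at hd
    rw [heq.deriv_eq, hd.deriv]
    simp [norm_exp_ofReal_mul_I]
  obtain hu₂ | hu₂ := h₂.lt_or_gt
  · have heq : keyholeContour δ θ =ᶠ[𝓝 u] fun v => ((δ : ℝ) : ℂ) * exp (-(v : ℂ) * I) := by
      filter_upwards [Ioo_mem_nhds hu₁ hu₂] with v hv using
        (if_neg (not_le.2 hv.1)).trans (if_pos hv.2.le)
    have hd := ((hasDerivAt_id u).neg.ofReal_comp.mul_const I).cexp.const_mul ((δ : ℝ) : ℂ)
    simp only [Pi.neg_apply, id, ofReal_neg] at hd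
    rw [heq.deriv_eq, hd.deriv]
    simp [← ofReal_neg, norm_exp_ofReal_mul_I, abs_of_nonneg hδ]
  · have heq : keyholeContour δ θ =ᶠ[𝓝 u]
        fun v => ((δ + (v - θ) : ℝ) : ℂ) * exp (-(θ : ℂ) * I) := by
      filter_upwards [Ioi_mem_nhds hu₂] with v hv using
        (if_neg (by linarith [hv.out])).trans (if_neg (not_le.2 hv))
    have hd := (((hasDerivAt_id u).sub_const θ).const_add δ).ofReal_comp.mul_const
      (exp (-(θ : ℂ) * I))
    simp only [id] at hd
    rw [heq.deriv_eq, hd.deriv]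
    simp [← ofReal_neg, norm_exp_ofReal_mul_I]

theorem ae_norm_keyholeContour_mul_norm_deriv_smul_le {X : Type*} [NormedAddCommGroup X]
    [NormedSpace ℂ X] (hδ : 0 ≤ δ) (hθ : 0 ≤ θ) {g : ℝ → X} {K : ℝ}
    (hK : ∀ u, ‖keyholeContour δ θ u‖ * ‖g u‖ ≤ K) :
    ∀ᵐ u, ‖keyholeContour δ θ u‖ * ‖deriv (keyholeContour δ θ) u • g u‖ ≤ max 1 δ * K := by
  filter_upwards [volume.ae_ne (-θ), volume.ae_ne θ] with u h₁ h₂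
  calc ‖keyholeContour δ θ u‖ * ‖deriv (keyholeContour δ θ) u • g u‖
      = ‖deriv (keyholeContour δ θ) u‖ * (‖keyholeContour δ θ u‖ * ‖g u‖) := by
        rw [norm_smul]; ring
    _ ≤ max 1 δ * K := mul_le_mul (norm_deriv_keyholeContour_le hδ hθ h₁ h₂) (hK u)
        (by positivity) (by positivity)

end Contour

theorem div_mul_one_add_abs_le_norm_keyholeContour {δ θ : ℝ} (hδ : 0 < δ) (hθ : 0 ≤ θ) (u : ℝ) :
    δ / (1 + θ + δ) * (1 + |u|) ≤ ‖keyholeContour δ θ u‖ := by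
  rw [norm_keyholeContour hδ.le hθ, div_mul_eq_mul_div, div_le_iff₀ (by positivity)]
  rcases le_total (|u| - θ) 0 with h | h
  · rw [max_eq_right h]; nlinarith
  · rw [max_eq_left h]; nlinarith

theorem exists_forall_le_of_continuous_of_forall_abs_ge {φ : ℝ → ℝ} (hφ : Continuous φ)
    {T M : ℝ} (h : ∀ u, T ≤ |u| → φ u ≤ M) : ∃ K, ∀ u, φ u ≤ K := by
  obtain ⟨K, hK⟩ := (isCompact_Icc (a := -T) (b := T)).bddAbove_image hφ.continuousOn
  refine ⟨max K M, fun u => ?_⟩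
  rcases le_total T |u| with hu | hu
  · exact (h u hu).trans (le_max_right K M)
  · exact (hK ⟨u, abs_le.1 hu, rfl⟩).trans (le_max_left K M)

theorem exists_norm_keyholeContour_mul_norm_le {X : Type*} [NormedAddCommGroup X] {δ θ : ℝ}
    (hδ : 0 < δ) (hθ : 0 ≤ θ) (hθπ : θ < Real.pi) {R : ℂ → X}
    (hR : Continuous fun u => ‖R (keyholeContour δ θ u)‖)
    (hA2 : ∃ M C : ℝ, ∀ lam ∈ keyhole δ θ, C ≤ ‖lam‖ → ‖R lam‖ * ‖lam‖ ≤ M) :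
    ∃ K, ∀ u, ‖keyholeContour δ θ u‖ * ‖R (keyholeContour δ θ u)‖ ≤ K := by
  obtain ⟨M, C, hMC⟩ := hA2
  refine exists_forall_le_of_continuous_of_forall_abs_ge
    ((continuous_keyholeContour hθ).norm.mul hR) (T := C + θ) fun u hu =>
      (mul_comm _ _).trans_le (hMC _ (keyholeContour_mem_keyhole hδ hθ hθπ u) ?_)
  rw [norm_keyholeContour hδ.le hθ]
  linarith [le_max_left (|u| - θ) 0]

theorem complex_powers_holomorphic_general (D : Submodule ℂ F) (A : D →ₗ[ℂ] F)
    (δ θ : ℝ) (hδ : 0 < δ) (hθ : 0 < θ) (hθπ : θ < Real.pi)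
    (R : ℂ → F →L[ℂ] F)
    (hres : ∀ lam ∈ keyhole δ θ, lam ≠ 0 →
      (∀ f : F, R lam f ∈ D) ∧
      (∀ (f : F) (h : R lam f ∈ D), A ⟨R lam f, h⟩ = lam • R lam f - f) ∧
      (∀ d : D, R lam (lam • (d : F) - A d) = (d : F)))
    (hA2 : ∃ M C : ℝ, ∀ lam ∈ keyhole δ θ, C ≤ ‖lam‖ →
      ‖R lam‖ * ‖lam‖ ≤ M) :
    DifferentiableOn ℂ (cpowA δ θ R) {z : ℂ | z.re < 0} := by
  set γ := keyholeContour δ θ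
  have hγc : Continuous γ := continuous_keyholeContour hθ.le
  have hγ : ∀ u, γ u ∈ keyhole δ θ \ {0} := fun u =>
    ⟨keyholeContour_mem_keyhole hδ hθ.le hθπ u, keyholeContour_ne_zero hδ hθ.le u⟩
  have hRγ : Continuous fun u => R (γ u) :=
    (continuousOn_of_resolvent_identity fun l hl m hm =>
      IsResolventAt.sub_eq (hres l hl.1 hl.2) (hres m hm.1 hm.2)).comp_continuous hγc hγ
  obtain ⟨K, hK⟩ := exists_norm_keyholeContour_mul_norm_le hδ hθ.le hθπ hRγ.norm hA2
  have hcpowA : cpowA δ θ R =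
      fun z => (2 * (Real.pi : ℂ) * I)⁻¹ • ∫ u, γ u ^ z • (deriv γ u • R (γ u)) := by
    simp_rw [← mul_smul]; rfl
  have hH : AEStronglyMeasurable (fun u => deriv γ u • R (γ u)) :=
    (measurable_deriv γ).aestronglyMeasurable.smul hRγ.aestronglyMeasurable
  have hHK : ∀ᵐ u, ‖γ u‖ * ‖deriv γ u • R (γ u)‖ ≤ max 1 δ * K :=
    ae_norm_keyholeContour_mul_norm_deriv_smul_le (g := fun u => R (γ u)) hδ.le hθ.le hK
  rw [hcpowA]
  exact (differentiableOn_integral_cpow_smul hγc.measurable hH (by positivity)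
    (div_mul_one_add_abs_le_norm_keyholeContour hδ hθ.le) hHK).const_smul
    (2 * (Real.pi : ℂ) * I)⁻¹

/-- Under conditions (A1) (spectrum avoids `Λ(δ,θ) \ {0}`) and (A2) (`‖(λ-A)^{-1}‖|λ|`
uniformly bounded for large `λ ∈ Λ`), the map `z ↦ A^z` defined by the Dunford integral
is holomorphic on the open left half-plane `{Re z < 0}`. -/
theorem complex_powers_holomorphic (D : Submodule ℂ F) (A : D →ₗ[ℂ] F)
    (δ θ : ℝ) (hδ : 0 < δ) (hθ : 0 < θ) (hθπ : θ < Real.pi)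
    (R : ℂ → F →L[ℂ] F)
    (hdense : Dense (D : Set F))
    (hclosed : IsClosed {q : F × F | ∃ hq : q.1 ∈ D, A ⟨q.1, hq⟩ = q.2})
    (hres : ∀ lam ∈ keyhole δ θ, lam ≠ 0 →
      (∀ f : F, R lam f ∈ D) ∧
      (∀ (f : F) (h : R lam f ∈ D), A ⟨R lam f, h⟩ = lam • R lam f - f) ∧
      (∀ d : D, R lam (lam • (d : F) - A d) = (d : F)))
    (hA2 : ∃ M C : ℝ, ∀ lam ∈ keyhole δ θ, C ≤ ‖lam‖ →
      ‖R lam‖ * ‖lam‖ ≤ M) :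
    DifferentiableOn ℂ (cpowA δ θ R) {z : ℂ | z.re < 0} :=
  complex_powers_holomorphic_general D A δ θ hδ hθ hθπ R hres hA2
end

section
/- Let n ≥ 0 be an integer, β ∈ ℝ, N > n + 1 + |β|, and −1 ≤ σ ≤ 0. The kernel k(t,s) = χ_{[0,1]}(t) · (t/s)^N t^{−n−1−σ} for s > t (and 0 for s ≤ t) satisfies the Schur test bounds: ∫₀^∞ t^β k(t,s) s^{−β} s^n ds ≤ C and ∫₀^∞ t^β k(t,s) s^{−β} t^n dt ≤ C for a constant C independent of σ, and hence the associated integral operator u ↦ ∫ k(·,s)u(s)s^n ds is bounded on t^β L^p((0,∞), t^n dt) uniformly in −1 ≤ σ ≤ 0, for every 1 < p < ∞. -/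
open MeasureTheory Set ENNReal

/-- The kernel `k(t,s) = χ_{[0,1]}(t) (t/s)^N t^{-n-1-σ}` for `s > t` and `0` for `s ≤ t`. -/
noncomputable def schurKernel (n : ℕ) (N σ t s : ℝ) : ℝ :=
  if t ≤ 1 ∧ t < s then (t/s) ^ N * t ^ (-(n:ℝ) - 1 - σ) else 0

/-!
Schur's test: if a kernel `K ≥ 0` has row integrals `≤ C₁` and column integrals `≤ C₂`, Hölder's
inequality with the weight `K(t, ·)` gives `(∫ K(t,s) v(s) ds)^p ≤ C₁^(p-1) ∫ K(t,s) v(s)^p ds`;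
integrating in `t` and swapping the integrals bounds the operator on `Lᵖ` by `C₁^(p-1) C₂`.
On `t^β Lᵖ(t^n dt)` this is applied to the conjugated kernel `t^γ k(t,s) s^(-γ)` with `γ = -β`.
Where `k ≠ 0` this kernel is `t^(γ+N-n-1-σ) s^(-(γ+N))`, so the row integral over `s > t` is
`t^(-σ)/(N+γ-n-1) ≤ 1/(N+γ-n-1)` because `t ≤ 1` and `σ ≤ 0`, and the column integral over
`t ≤ min 1 s` is at most `1/(N+γ)`. For `γ = ±β` both are `≤ 1/(N-|β|-n-1)`, whatever `σ`.
-/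

section SchurTest

variable {α β : Type*} [MeasurableSpace α] [MeasurableSpace β]

theorem rpow_lintegral_weight_mul_le {μ : Measure α} {p : ℝ} (hp : 1 < p)
    {w f : α → ℝ≥0∞} (hw : AEMeasurable w μ) (hf : AEMeasurable f μ) :
    (∫⁻ a, w a * f a ∂μ) ^ p ≤ (∫⁻ a, w a ∂μ) ^ (p - 1) * ∫⁻ a, w a * f a ^ p ∂μ := by
  set q := p.conjExponent
  have hpq : p.HolderConjugate q := .conjExponent hp
  have hp0 : 0 < p := hpq.pos
  have hsplit : ∀ a, w a * f a = w a ^ (1 / q) * (w a ^ (1 / p) * f a) := fun a => by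
    rw [← mul_assoc, ← rpow_add_of_nonneg _ _ (one_div_pos.2 hpq.symm.pos).le
      (one_div_pos.2 hp0).le, one_div, one_div, hpq.symm.inv_add_inv_eq_one, rpow_one]
  have hholder : ∫⁻ a, w a * f a ∂μ ≤
      (∫⁻ a, w a ∂μ) ^ (1 / q) * (∫⁻ a, w a * f a ^ p ∂μ) ^ (1 / p) := by
    calc ∫⁻ a, w a * f a ∂μ
        = ∫⁻ a, ((fun a => w a ^ (1 / q)) * fun a => w a ^ (1 / p) * f a) a ∂μ := by
          simp only [Pi.mul_apply, ← hsplit]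
      _ ≤ _ := ENNReal.lintegral_mul_le_Lp_mul_Lq μ hpq.symm (hw.pow_const _)
          ((hw.pow_const _).mul hf)
      _ = _ := by
          simp only [← rpow_mul, mul_rpow_of_nonneg _ _ hp0.le,
            one_div_mul_cancel hpq.symm.ne_zero, one_div_mul_cancel hp0.ne', rpow_one]
  have hexp : 1 / q * p = p - 1 := by
    rw [one_div, inv_mul_eq_div, div_eq_iff hpq.symm.ne_zero, hpq.sub_one_mul_conj]
  calc (∫⁻ a, w a * f a ∂μ) ^ p
      ≤ ((∫⁻ a, w a ∂μ) ^ (1 / q) * (∫⁻ a, w a * f a ^ p ∂μ) ^ (1 / p)) ^ p := by gcongr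
    _ = (∫⁻ a, w a ∂μ) ^ (p - 1) * ∫⁻ a, w a * f a ^ p ∂μ := by
      rw [mul_rpow_of_nonneg _ _ hp0.le, ← rpow_mul, ← rpow_mul, one_div_mul_cancel hp0.ne',
        rpow_one, hexp]

theorem lintegral_rpow_kernel_le_of_schur {μ : Measure α} {ν : Measure β} [SFinite μ]
    [SFinite ν] {K : α → β → ℝ≥0∞} (hK : Measurable (Function.uncurry K)) {C₁ C₂ : ℝ≥0∞}
    (hrow : ∀ᵐ a ∂μ, ∫⁻ b, K a b ∂ν ≤ C₁) (hcol : ∀ᵐ b ∂ν, ∫⁻ a, K a b ∂μ ≤ C₂)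
    {p : ℝ} (hp : 1 < p) {f : β → ℝ≥0∞} (hf : Measurable f) :
    ∫⁻ a, (∫⁻ b, K a b * f b ∂ν) ^ p ∂μ ≤ C₁ ^ (p - 1) * C₂ * ∫⁻ b, f b ^ p ∂ν := by
  have hKf : Measurable (Function.uncurry fun a b => K a b * f b ^ p) :=
    hK.mul ((hf.pow_const p).comp measurable_snd)
  calc ∫⁻ a, (∫⁻ b, K a b * f b ∂ν) ^ p ∂μ
      ≤ ∫⁻ a, C₁ ^ (p - 1) * ∫⁻ b, K a b * f b ^ p ∂ν ∂μ := by
        refine lintegral_mono_ae (hrow.mono fun a ha => ?_)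
        refine (rpow_lintegral_weight_mul_le hp ?_ hf.aemeasurable).trans ?_
        · exact (hK.comp measurable_prodMk_left).aemeasurable
        · gcongr
    _ = C₁ ^ (p - 1) * ∫⁻ b, (∫⁻ a, K a b ∂μ) * f b ^ p ∂ν := by
        have hmeas : Measurable fun a => ∫⁻ b, K a b * f b ^ p ∂ν := hKf.lintegral_prod_right'
        rw [lintegral_const_mul _ hmeas, lintegral_lintegral_swap hKf.aemeasurable]
        congr 1
        refine lintegral_congr fun b => lintegral_mul_const _ ?_
        exact hK.comp measurable_prodMk_right
    _ ≤ C₁ ^ (p - 1) * ∫⁻ b, C₂ * f b ^ p ∂ν := by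
        gcongr 1
        exact lintegral_mono_ae (hcol.mono fun b hb => by gcongr)
    _ = C₁ ^ (p - 1) * C₂ * ∫⁻ b, f b ^ p ∂ν := by
        rw [lintegral_const_mul _ (hf.pow_const p), mul_assoc]

end SchurTest

theorem lintegral_Ioi_rpow_s9 {a c : ℝ} (ha : a < -1) (hc : 0 < c) :
    ∫⁻ x in Ioi c, ENNReal.ofReal (x ^ a) = ENNReal.ofReal (c ^ (a + 1) / -(a + 1)) := by
  rw [← ofReal_integral_eq_lintegral_ofReal (integrableOn_Ioi_rpow_of_lt ha hc)
    (ae_restrict_of_forall_mem measurableSet_Ioi fun x hx => Real.rpow_nonneg (hc.trans hx).le a),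
    integral_Ioi_rpow_of_lt ha hc, neg_div, div_neg]

theorem lintegral_Ioc_rpow_s9 {a m : ℝ} (ha : -1 < a) (hm : 0 ≤ m) :
    ∫⁻ x in Ioc 0 m, ENNReal.ofReal (x ^ a) = ENNReal.ofReal (m ^ (a + 1) / (a + 1)) := by
  have hint : IntegrableOn (fun x : ℝ => x ^ a) (Ioc 0 m) :=
    (intervalIntegrable_iff_integrableOn_Ioc_of_le hm).1
      (intervalIntegral.intervalIntegrable_rpow' ha)
  rw [← ofReal_integral_eq_lintegral_ofReal hint
    (ae_restrict_of_forall_mem measurableSet_Ioc fun x hx => Real.rpow_nonneg hx.1.le a),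
    ← intervalIntegral.integral_of_le hm, integral_rpow (Or.inl ha),
    Real.zero_rpow (by linarith), sub_zero]

theorem setLIntegral_Ioi_weighted_kernel_rpow_le {k : ℝ → ℝ → ℝ}
    (hk : Measurable (Function.uncurry k)) {γ r : ℝ} {C : ℝ≥0∞}
    (hrow : ∀ t ∈ Ioi (0:ℝ),
      ∫⁻ s in Ioi 0, ENNReal.ofReal (t ^ γ * k t s * s ^ (-γ) * s ^ r) ≤ C)
    (hcol : ∀ s ∈ Ioi (0:ℝ),
      ∫⁻ t in Ioi 0, ENNReal.ofReal (t ^ γ * k t s * s ^ (-γ) * t ^ r) ≤ C)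
    {p : ℝ} (hp : 1 < p) {u : ℝ → ℝ≥0∞} (hu : Measurable u) :
    ∫⁻ t in Ioi 0, (ENNReal.ofReal (t ^ γ) *
        ∫⁻ s in Ioi 0, ENNReal.ofReal (k t s) * u s * ENNReal.ofReal (s ^ r)) ^ p *
        ENNReal.ofReal (t ^ r) ≤
      C ^ p * ∫⁻ t in Ioi 0, (ENNReal.ofReal (t ^ γ) * u t) ^ p * ENNReal.ofReal (t ^ r) := by
  set μ : Measure ℝ := (volume.restrict (Ioi 0)).withDensity fun x => ENNReal.ofReal (x ^ r)
  have hμ (g : ℝ → ℝ≥0∞) : ∫⁻ x, g x ∂μ = ∫⁻ x in Ioi 0, g x * ENNReal.ofReal (x ^ r) := by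
    rw [lintegral_withDensity_eq_lintegral_mul_non_measurable _ (by fun_prop)
      (ae_of_all _ fun _ => ofReal_lt_top)]
    simp_rw [Pi.mul_apply, mul_comm]
  have hpos : ∀ᵐ x ∂μ, x ∈ Ioi (0:ℝ) :=
    (withDensity_absolutelyContinuous _ _).ae_le (ae_restrict_mem measurableSet_Ioi)
  have hdensity {x : ℝ} (hx : x ∈ Ioi (0:ℝ)) (a : ℝ) :
      ENNReal.ofReal a * ENNReal.ofReal (x ^ r) = ENNReal.ofReal (a * x ^ r) :=
    (ENNReal.ofReal_mul' (Real.rpow_nonneg (le_of_lt hx) r)).symm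
  set K : ℝ → ℝ → ℝ≥0∞ := fun t s => ENNReal.ofReal (t ^ γ * k t s * s ^ (-γ))
  have hrowK : ∀ᵐ t ∂μ, ∫⁻ s, K t s ∂μ ≤ C := hpos.mono fun t ht => by
    simpa only [hμ, K, setLIntegral_congr_fun measurableSet_Ioi fun s hs => hdensity hs _]
      using hrow t ht
  have hcolK : ∀ᵐ s ∂μ, ∫⁻ t, K t s ∂μ ≤ C := hpos.mono fun s hs => by
    simpa only [hμ, K, setLIntegral_congr_fun measurableSet_Ioi fun t ht => hdensity ht _]
      using hcol s hs
  have hinner : ∀ t ∈ Ioi (0:ℝ), ∫⁻ s, K t s * (ENNReal.ofReal (s ^ γ) * u s) ∂μ =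
      ENNReal.ofReal (t ^ γ) *
        ∫⁻ s in Ioi 0, ENNReal.ofReal (k t s) * u s * ENNReal.ofReal (s ^ r) := by
    intro t ht
    rw [hμ, ← lintegral_const_mul' _ _ ofReal_ne_top]
    refine setLIntegral_congr_fun measurableSet_Ioi fun s hs => ?_
    have hcancel : ENNReal.ofReal (s ^ (-γ)) * ENNReal.ofReal (s ^ γ) = 1 := by
      rw [← ENNReal.ofReal_mul (Real.rpow_nonneg (le_of_lt hs) _), ← Real.rpow_add hs,
        neg_add_cancel, Real.rpow_zero, ENNReal.ofReal_one]
    simp only [K]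
    rw [ENNReal.ofReal_mul' (Real.rpow_nonneg (le_of_lt hs) _),
      ENNReal.ofReal_mul (Real.rpow_nonneg (le_of_lt ht) _)]
    calc _ = ENNReal.ofReal (t ^ γ) * ENNReal.ofReal (k t s) *
          (ENNReal.ofReal (s ^ (-γ)) * ENNReal.ofReal (s ^ γ)) * u s *
          ENNReal.ofReal (s ^ r) := by ring
      _ = _ := by rw [hcancel]; ring
  have hschur := lintegral_rpow_kernel_le_of_schur (by fun_prop) hrowK hcolK hp
    (by fun_prop : Measurable fun s => ENNReal.ofReal (s ^ γ) * u s)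
  have hC : C ^ (p - 1) * C = C ^ p := by
    conv_rhs => rw [← sub_add_cancel p 1, rpow_add_of_nonneg _ _ (by linarith) zero_le_one,
      rpow_one]
  calc _ = ∫⁻ t, (∫⁻ s, K t s * (ENNReal.ofReal (s ^ γ) * u s) ∂μ) ^ p ∂μ := by
        rw [hμ]
        exact setLIntegral_congr_fun measurableSet_Ioi fun t ht => by rw [hinner t ht]
    _ ≤ _ := hschur
    _ = _ := by rw [hC, hμ]

namespace schurKernel

variable {n : ℕ} {N σ t s : ℝ}

theorem measurable_uncurry (n : ℕ) (N σ : ℝ) :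
    Measurable (Function.uncurry (schurKernel n N σ)) := by
  unfold schurKernel Function.uncurry
  refine Measurable.ite ?_ (by fun_prop) measurable_const
  exact (measurableSet_le measurable_fst measurable_const).inter
    (measurableSet_lt measurable_fst measurable_snd)

theorem rpow_mul_mul_rpow_of_lt (γ : ℝ) (ht : 0 < t) (ht1 : t ≤ 1) (hts : t < s) :
    t ^ γ * schurKernel n N σ t s * s ^ (-γ) = t ^ (γ + N - n - 1 - σ) * s ^ (-(γ + N)) := by
  have hs : 0 < s := ht.trans hts
  rw [schurKernel, if_pos ⟨ht1, hts⟩, Real.div_rpow ht.le hs.le,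
    show γ + N - n - 1 - σ = γ + N + (-(n:ℝ) - 1 - σ) by ring, Real.rpow_add ht,
    Real.rpow_add ht, Real.rpow_neg hs.le, Real.rpow_neg hs.le, Real.rpow_add hs]
  ring

theorem lintegral_row_le {γ : ℝ} (hγ : n + 1 < N + γ) (hσ : σ ≤ 0) (ht : 0 < t) :
    ∫⁻ s in Ioi 0, ENNReal.ofReal (t ^ γ * schurKernel n N σ t s * s ^ (-γ) * s ^ (n:ℝ)) ≤
      ENNReal.ofReal (N + γ - n - 1)⁻¹ := by
  rcases le_or_gt t 1 with ht1 | ht1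
  swap
  · have hzero : ∀ s, schurKernel n N σ t s = 0 := fun s => if_neg fun h => ht1.not_ge h.1
    simp [hzero]
  set c : ℝ := t ^ (γ + N - n - 1 - σ)
  have hc : 0 ≤ c := Real.rpow_nonneg ht.le _
  have hle : ∀ s ∈ Ioi (0:ℝ),
      ENNReal.ofReal (t ^ γ * schurKernel n N σ t s * s ^ (-γ) * s ^ (n:ℝ)) ≤
        (Ioi t).indicator (fun s => ENNReal.ofReal c * ENNReal.ofReal (s ^ (n - (γ + N)))) s := by
    intro s hs
    by_cases hts : t < s
    · rw [indicator_of_mem (mem_Ioi.2 hts), ← ENNReal.ofReal_mul hc,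
        rpow_mul_mul_rpow_of_lt γ ht ht1 hts, mul_assoc, ← Real.rpow_add hs, neg_add_eq_sub]
    · simp [schurKernel, hts]
  calc _ ≤ ∫⁻ s in Ioi 0, (Ioi t).indicator
          (fun s => ENNReal.ofReal c * ENNReal.ofReal (s ^ (n - (γ + N)))) s :=
          setLIntegral_mono' measurableSet_Ioi hle
    _ = ENNReal.ofReal c * ENNReal.ofReal (t ^ (n - (γ + N) + 1) / -(n - (γ + N) + 1)) := by
        rw [setLIntegral_indicator measurableSet_Ioi, inter_eq_left.2 (Ioi_subset_Ioi ht.le),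
          lintegral_const_mul' _ _ ofReal_ne_top, lintegral_Ioi_rpow_s9 (by linarith) ht]
    _ = ENNReal.ofReal (t ^ (-σ) / (N + γ - n - 1)) := by
        rw [← ENNReal.ofReal_mul hc, ← mul_div_assoc, ← Real.rpow_add ht]
        congr 2
        · congr 1; ring
        · ring
    _ ≤ ENNReal.ofReal (N + γ - n - 1)⁻¹ := by
        rw [← one_div]
        exact ENNReal.ofReal_le_ofReal (div_le_div_of_nonneg_right
          (Real.rpow_le_one ht.le ht1 (neg_nonneg.2 hσ)) (by linarith))

theorem lintegral_col_le {γ : ℝ} (hγ : 0 < N + γ) (hσ : σ ≤ 0) (hs : 0 < s) :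
    ∫⁻ t in Ioi 0, ENNReal.ofReal (t ^ γ * schurKernel n N σ t s * s ^ (-γ) * t ^ (n:ℝ)) ≤
      ENNReal.ofReal (N + γ)⁻¹ := by
  set m := min 1 s
  set c : ℝ := s ^ (-(γ + N))
  have hc : 0 ≤ c := Real.rpow_nonneg hs.le _
  have hle : ∀ t ∈ Ioi (0:ℝ),
      ENNReal.ofReal (t ^ γ * schurKernel n N σ t s * s ^ (-γ) * t ^ (n:ℝ)) ≤
        (Iic m).indicator (fun t => ENNReal.ofReal c * ENNReal.ofReal (t ^ (γ + N - 1 - σ))) t := by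
    intro t ht
    by_cases hts : t ≤ 1 ∧ t < s
    · rw [indicator_of_mem (mem_Iic.2 (le_min hts.1 hts.2.le)), ← ENNReal.ofReal_mul hc,
        rpow_mul_mul_rpow_of_lt γ ht hts.1 hts.2, mul_comm _ c, mul_assoc, ← Real.rpow_add ht,
        show γ + N - n - 1 - σ + n = γ + N - 1 - σ by ring]
    · simp [schurKernel, hts]
  have hmass : c * m ^ (γ + N - 1 - σ + 1) ≤ 1 := by
    rcases le_or_gt s 1 with hs1 | hs1
    · rw [show m = s from min_eq_right hs1, ← Real.rpow_add hs]
      exact Real.rpow_le_one hs.le hs1 (by linarith)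
    · rw [show m = 1 from min_eq_left hs1.le, Real.one_rpow, mul_one]
      exact Real.rpow_le_one_of_one_le_of_nonpos hs1.le (by linarith)
  calc _ ≤ ∫⁻ t in Ioi 0, (Iic m).indicator
          (fun t => ENNReal.ofReal c * ENNReal.ofReal (t ^ (γ + N - 1 - σ))) t :=
          setLIntegral_mono' measurableSet_Ioi hle
    _ = ENNReal.ofReal c * ENNReal.ofReal (m ^ (γ + N - 1 - σ + 1) / (γ + N - 1 - σ + 1)) := by
        rw [setLIntegral_indicator measurableSet_Iic, inter_comm, Ioi_inter_Iic,
          lintegral_const_mul' _ _ ofReal_ne_top,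
          lintegral_Ioc_rpow_s9 (by linarith) (le_min zero_le_one hs.le)]
    _ = ENNReal.ofReal (c * m ^ (γ + N - 1 - σ + 1) / (γ + N - 1 - σ + 1)) := by
        rw [← ENNReal.ofReal_mul hc, mul_div_assoc]
    _ ≤ ENNReal.ofReal (N + γ)⁻¹ := by
        rw [← one_div]
        exact ENNReal.ofReal_le_ofReal <| div_le_div₀ zero_le_one hmass hγ (by linarith)

end schurKernel

/-- For `N > n + 1 + |β|` the kernel `k(t,s) = χ_{[0,1]}(t) (t/s)^N t^{-n-1-σ}` (for `s > t`,
`0` otherwise) satisfies the Schur test bounds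
`∫₀^∞ t^β k(t,s) s^{-β} s^n ds ≤ C` and `∫₀^∞ t^β k(t,s) s^{-β} t^n dt ≤ C`
for a constant `C` independent of `σ ∈ [-1,0]`, and hence the associated integral operator
`u ↦ ∫ k(·,s) u(s) s^n ds` is bounded on `t^β L^p((0,∞), t^n dt)` uniformly in
`-1 ≤ σ ≤ 0`, for every `1 < p < ∞`. -/
theorem schur_kernel_bounded (n : ℕ) (β N : ℝ) (hN : (n:ℝ) + 1 + |β| < N) :
    ∃ C : ℝ, 0 ≤ C ∧ ∀ σ : ℝ, -1 ≤ σ → σ ≤ 0 →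
      (∀ t ∈ Ioi (0:ℝ),
        ∫⁻ s in Ioi (0:ℝ),
          ENNReal.ofReal (t ^ β * schurKernel n N σ t s * s ^ (-β) * s ^ (n:ℝ)) ≤
        ENNReal.ofReal C) ∧
      (∀ s ∈ Ioi (0:ℝ),
        ∫⁻ t in Ioi (0:ℝ),
          ENNReal.ofReal (t ^ β * schurKernel n N σ t s * s ^ (-β) * t ^ (n:ℝ)) ≤
        ENNReal.ofReal C) ∧
      (∀ p : ℝ, 1 < p → ∀ u : ℝ → ℝ≥0∞, Measurable u →
        ∫⁻ t in Ioi (0:ℝ),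
            (ENNReal.ofReal (t ^ (-β)) *
              ∫⁻ s in Ioi (0:ℝ),
                ENNReal.ofReal (schurKernel n N σ t s) * u s * ENNReal.ofReal (s ^ (n:ℝ))) ^ p *
            ENNReal.ofReal (t ^ (n:ℝ)) ≤
          ENNReal.ofReal C ^ p *
            ∫⁻ t in Ioi (0:ℝ),
              (ENNReal.ofReal (t ^ (-β)) * u t) ^ p * ENNReal.ofReal (t ^ (n:ℝ))) := by
  have hD : 0 < N - |β| - n - 1 := by linarith
  set C : ℝ := (N - |β| - n - 1)⁻¹
  have hbound {x : ℝ} (hx : N - |β| - n - 1 ≤ x) : ENNReal.ofReal x⁻¹ ≤ ENNReal.ofReal C :=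
    ENNReal.ofReal_le_ofReal (inv_anti₀ hD hx)
  refine ⟨C, (inv_pos.2 hD).le, fun σ _ hσ => ?_⟩
  have hrow (γ : ℝ) (hγ : |γ| = |β|) : ∀ t ∈ Ioi (0:ℝ), ∫⁻ s in Ioi (0:ℝ),
      ENNReal.ofReal (t ^ γ * schurKernel n N σ t s * s ^ (-γ) * s ^ (n:ℝ)) ≤
        ENNReal.ofReal C := fun t ht =>
    (schurKernel.lintegral_row_le (by linarith [neg_abs_le γ]) hσ ht).trans
      (hbound (by linarith [neg_abs_le γ]))
  have hcol (γ : ℝ) (hγ : |γ| = |β|) : ∀ s ∈ Ioi (0:ℝ), ∫⁻ t in Ioi (0:ℝ),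
      ENNReal.ofReal (t ^ γ * schurKernel n N σ t s * s ^ (-γ) * t ^ (n:ℝ)) ≤
        ENNReal.ofReal C := fun s hs =>
    (schurKernel.lintegral_col_le (by linarith [neg_abs_le γ]) hσ hs).trans
      (hbound (by linarith [neg_abs_le γ]))
  exact ⟨hrow β rfl, hcol β rfl, fun p hp u hu =>
    setLIntegral_Ioi_weighted_kernel_rpow_le (schurKernel.measurable_uncurry n N σ)
      (hrow (-β) (abs_neg β)) (hcol (-β) (abs_neg β)) hp hu⟩
end
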